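/- Suppose B = B(H), the bounded operators on a complex Hilbert space H. An element C ∈ M₂(ℂ)^{⊗L} ⊗ M₂(ℂ)^{⊗M} ⊗ B(H) commutes with every T_i and every T_i* if and only if C = 1 ⊗ 1 ⊗ C' for some C' ∈ B(H) commuting with every v_i, i ∈ M ⊔ R. In particular, the family (T_i)_{i=1}^{n} acts irreducibly (its commutant is the scalar multiples of the identity) if and only if the family (v_i)_{i∈M⊔R} acts irreducibly on H. -/

import Mathlib

open Complex Matrix

noncomputable section

/-- Index set of the tensor factor `(ℂ²)^{⊗L} ⊗ (ℂ²)^{⊗M}`. -/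
abbrev Jidx {n : ℕ} (L M : Finset (Fin n)) : Type := {k : Fin n // k ∈ L ∪ M} → Fin 2

variable {n : ℕ} {B : Type*} [Ring B] [Algebra ℂ B] [StarRing B] [StarModule ℂ B]

/-- The operator `e = [[0,1],[0,0]]` acting in the `k`-th slot (and `0` for `k ∉ L ∪ M`). -/
def Ek (L M : Finset (Fin n)) (k : Fin n) : Matrix (Jidx L M) (Jidx L M) B :=
  if h : k ∈ L ∪ M then
    Matrix.of (fun σ τ : Jidx L M =>
      if τ ⟨k, h⟩ = 1 ∧ σ = Function.update τ ⟨k, h⟩ 0 then (1 : B) else 0)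
  else 0

/-- The element `1 ⊗ 1 ⊗ b`. -/
def scalarMat (L M : Finset (Fin n)) (b : B) : Matrix (Jidx L M) (Jidx L M) B :=
  Matrix.diagonal (fun _ => b)

/-- Ordered product of matrices indexed by a finset of `Fin n`. -/
def prodOver {L M : Finset (Fin n)} (s : Finset (Fin n))
    (f : Fin n → Matrix (Jidx L M) (Jidx L M) B) : Matrix (Jidx L M) (Jidx L M) B :=
  ((s.sort (· ≤ ·)).map f).prod

/-- The skew-symmetric matrix `Σ` built from `Θ` and the partition `L ⊔ M ⊔ R`. -/
def SigMat (M R : Finset (Fin n)) (Θ : Matrix (Fin n) (Fin n) ℝ) :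
    Matrix (Fin n) (Fin n) ℝ :=
  fun i j =>
    if i ∈ M ∧ j ∈ M then 4 * Θ i j
    else if (i ∈ M ∧ j ∈ R) ∨ (i ∈ R ∧ j ∈ M) then 2 * Θ i j
    else Θ i j

/-- The operators `T_i` of the representation `τ_x` of `CAR_Θ`. -/
def carOp (L M : Finset (Fin n)) (Θ : Matrix (Fin n) (Fin n) ℝ) (x : Fin n → ℝ)
    (v : Fin n → B) (i : Fin n) : Matrix (Jidx L M) (Jidx L M) B :=
  if i ∈ L then
    prodOver L (fun k => Ek L M k * star (Ek L M k) +
        Complex.exp (Real.pi * Complex.I * (Θ i k : ℂ)) • (star (Ek L M k) * Ek L M k)) *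
      Ek L M i
  else if i ∈ M then
    prodOver L (fun k => Ek L M k * star (Ek L M k) +
        Complex.exp (Real.pi * Complex.I * (Θ i k : ℂ)) • (star (Ek L M k) * Ek L M k)) *
    prodOver (M.filter (· < i)) (fun k => star (Ek L M k) * Ek L M k +
        Complex.exp (2 * Real.pi * Complex.I * (Θ i k : ℂ)) • (Ek L M k * star (Ek L M k))) *
    ((Real.sqrt (x i) : ℂ) •
        (prodOver (M.filter (i ≤ ·)) (fun k => star (Ek L M k) * Ek L M k +
            Complex.exp (4 * Real.pi * Complex.I * (Θ i k : ℂ)) •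
              (Ek L M k * star (Ek L M k))) *
          Ek L M i * scalarMat L M (v i)) +
      (Real.sqrt (1 - x i) : ℂ) • star (Ek L M i))
  else
    prodOver L (fun k => Ek L M k * star (Ek L M k) +
        Complex.exp (Real.pi * Complex.I * (Θ i k : ℂ)) • (star (Ek L M k) * Ek L M k)) *
    prodOver M (fun k => star (Ek L M k) * Ek L M k +
        Complex.exp (2 * Real.pi * Complex.I * (Θ i k : ℂ)) • (Ek L M k * star (Ek L M k))) *
    ((Real.sqrt 2 : ℂ)⁻¹ • scalarMat L M (v i))

/-
If `C` commutes with `T_i` and `T_i*`, it commutes with `T_i* T_i`. For `i ∈ L` this is the slot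
projection `e_i* e_i`; for `i ∈ M` it is `x_i e_i* e_i + (1 - x_i) e_i e_i*`, and `x_i ≠ 1 - x_i`
since `x_i < 1/2`. So `C` commutes with every slot projection and is diagonal. The prefactors of
the `T_i` are diagonal unitaries with scalar entries, so the diagonal `C` commutes with `e_i`
(`i ∈ L`), resp. with `e_i*` (the `e_i*`-part of `T_i` for `i ∈ M`): its diagonal is invariant
under flipping any slot, i.e. `C = 1 ⊗ 1 ⊗ C'`. The `v_i`-parts of the `T_i`, `i ∈ M ⊔ R`, then
give `C' v_i = v_i C'`. Conversely, `C'` also commutes with `v_i* = v_i⁻¹`, and each `T_i` lies in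
the *-algebra generated by the `e_k` and the `1 ⊗ 1 ⊗ v_i`.
-/

theorem Complex.exp_mem_unitary {z : ℂ} (hz : z.re = 0) : Complex.exp z ∈ unitary ℂ := by
  rw [Unitary.mem_iff_star_mul_self, Complex.star_def, ← Complex.exp_conj, ← Complex.exp_add,
    add_comm, Complex.add_conj, hz]
  simp

theorem Commute.star_right_of_mem_unitary {A : Type*} [Monoid A] [StarMul A] {a u : A}
    (hu : u ∈ unitary A) (h : Commute a u) : Commute a (star u) :=
  calc a * star u = star u * (u * a) * star u := by
        simp [← mul_assoc, Unitary.star_mul_self_of_mem hu]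
    _ = star u * a := by
        rw [← h.eq, mul_assoc, mul_assoc, Unitary.mul_star_self_of_mem hu, mul_one]

theorem Commute.of_unitary_mul_right {A : Type*} [Monoid A] [StarMul A] {a u b : A}
    (h : Commute a (u * b)) (hu : u ∈ unitary A) (hau : Commute a u) : Commute a b := by
  simpa [← mul_assoc, Unitary.star_mul_self_of_mem hu] using
    (hau.star_right_of_mem_unitary hu).mul_right h

theorem star_mul_self_unitary_mul {R : Type*} [Monoid R] [StarMul R] {W : R} (hW : W ∈ unitary R)
    (X : R) : star (W * X) * (W * X) = star X * X := by
  rw [star_mul, mul_assoc, ← mul_assoc (star W), Unitary.star_mul_self_of_mem hW, one_mul]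

theorem Commute.of_smul_add_smul_one_sub {A : Type*} [Ring A] [Algebra ℂ A] {a p : A} {s t : ℂ}
    (hst : s ≠ t) (h : Commute a (s • p + t • (1 - p))) : Commute a p := by
  have hsplit : s • p + t • (1 - p) = t • 1 + (s - t) • p := by module
  rw [hsplit] at h
  have := h.sub_right ((Commute.one_right a).smul_right t)
  rwa [add_sub_cancel_left, Commute.smul_right_iff₀ (sub_ne_zero.mpr hst)] at this

theorem Matrix.commute_diagonal_const_iff {ι A : Type*} [Fintype ι] [DecidableEq ι] [Semiring A]
    {b : A} {X : Matrix ι ι A} :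
    Commute (diagonal fun _ => b) X ↔ ∀ σ τ, Commute b (X σ τ) := by
  simp only [Commute, SemiconjBy, ← Matrix.ext_iff, diagonal_mul, mul_diagonal]

theorem Matrix.forall_eq_smul_one_iff_of_forall_iff_eq_diagonal {ι A : Type*} [Fintype ι]
    [DecidableEq ι] [Nonempty ι] [Semiring A] [Module ℂ A] {P : Matrix ι ι A → Prop}
    {Q : A → Prop} (h : ∀ C, P C ↔ ∃ C', Q C' ∧ C = diagonal fun _ => C') :
    (∀ C, P C → ∃ c : ℂ, C = c • 1) ↔ ∀ C', Q C' → ∃ c : ℂ, C' = c • 1 := by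
  have hdiag (C' : A) (c : ℂ) : (diagonal fun _ => C' : Matrix ι ι A) = c • 1 ↔ C' = c • 1 := by
    rw [← diagonal_one, ← diagonal_smul, diagonal_injective.eq_iff]
    exact Function.const_inj
  constructor
  · intro hP C' hQ
    obtain ⟨c, hc⟩ := hP _ ((h _).mpr ⟨C', hQ, rfl⟩)
    exact ⟨c, (hdiag C' c).mp hc⟩
  · intro hQ C hP
    obtain ⟨C', hC', rfl⟩ := (h C).mp hP
    obtain ⟨c, hc⟩ := hQ C' hC'
    exact ⟨c, (hdiag C' c).mpr hc⟩

theorem Function.and_eq_update_comm {ι α : Type*} [DecidableEq ι] {σ τ : ι → α} {i : ι}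
    {a b : α} : τ i = b ∧ σ = Function.update τ i a ↔ σ i = a ∧ τ = Function.update σ i b := by
  constructor <;> rintro ⟨h, rfl⟩ <;> simp [h]

theorem Function.apply_eq_of_update_invariant {ι α β : Type*} [Fintype ι] [DecidableEq ι]
    {c : (ι → α) → β} (h : ∀ τ i a, c (Function.update τ i a) = c τ) (τ τ' : ι → α) :
    c τ = c τ' := by
  suffices ∀ s : Finset ι, ∀ τ : ι → α, (∀ i ∉ s, τ i = τ' i) → c τ = c τ' from
    this Finset.univ τ (by simp)
  intro s
  induction s using Finset.induction_on with
  | empty => exact fun τ hτ => congrArg c (funext fun i => hτ i (Finset.notMem_empty i))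
  | insert j s _ ih =>
    intro τ hτ
    rw [← h τ j (τ' j)]
    refine ih _ fun i hi => ?_
    by_cases hij : i = j
    · simp [hij]
    · simp [Function.update_of_ne hij, hτ i (by simp [hij, hi])]

theorem Function.apply_eq_of_update_zero_eq_update_one {ι β : Type*} [Fintype ι] [DecidableEq ι]
    {c : (ι → Fin 2) → β} (h : ∀ τ i, c (Function.update τ i 0) = c (Function.update τ i 1))
    (τ τ' : ι → Fin 2) : c τ = c τ' := by
  refine Function.apply_eq_of_update_invariant (fun τ i a => ?_) τ τ'
  conv_rhs => rw [← Function.update_eq_self i τ]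
  have key : ∀ a b : Fin 2, c (Function.update τ i a) = c (Function.update τ i b) := by
    simp only [Fin.forall_fin_two, h, and_true]
  exact key _ _

section SlotProjections

variable {ι A : Type*} [Fintype ι]

def slotProj [Semiring A] (i : ι) (a : Fin 2) : Matrix (ι → Fin 2) (ι → Fin 2) A :=
  diagonal fun σ => if σ i = a then 1 else 0

theorem slotProj_zero [Ring A] (i : ι) :
    (slotProj i 0 : Matrix (ι → Fin 2) (ι → Fin 2) A) = 1 - slotProj i 1 := by
  rw [slotProj, slotProj, ← diagonal_one, diagonal_sub]
  congr 1
  funext σ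
  rcases Fin.exists_fin_two.mp ⟨σ i, rfl⟩ with h | h <;> simp [h]

theorem slotProj_one [Ring A] (i : ι) :
    (slotProj i 1 : Matrix (ι → Fin 2) (ι → Fin 2) A) = 1 - slotProj i 0 := by
  rw [slotProj_zero, sub_sub_cancel]

theorem commute_slotProj_diagonal [DecidableEq ι] [Semiring A] (i : ι) (a : Fin 2)
    (d : (ι → Fin 2) → A) :
    Commute (slotProj i a) (diagonal d) := by
  rw [slotProj, Commute, SemiconjBy, diagonal_mul_diagonal, diagonal_mul_diagonal]
  congr 1
  funext σ
  split_ifs <;> simp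

theorem eq_diagonal_of_forall_commute_slotProj [DecidableEq ι] [Semiring A]
    {C : Matrix (ι → Fin 2) (ι → Fin 2) A} (h : ∀ i, Commute C (slotProj i 1)) :
    C = diagonal fun σ => C σ σ := by
  ext σ τ
  by_cases hστ : σ = τ
  · simp [hστ]
  obtain ⟨i, hi⟩ := Function.ne_iff.mp hστ
  have hentry := congr_fun₂ (h i).eq σ τ
  simp only [slotProj, mul_diagonal, diagonal_mul, mul_ite, ite_mul, mul_one, one_mul,
    mul_zero, zero_mul] at hentry
  rw [diagonal_apply_ne _ hστ]
  rcases Fin.exists_fin_two.mp ⟨τ i, rfl⟩ with h1 | h1 <;>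
    rcases Fin.exists_fin_two.mp ⟨σ i, rfl⟩ with h2 | h2 <;> simp_all

end SlotProjections

section DiagonalCommutingUnitaries

variable (ι A : Type*) [Fintype ι] [DecidableEq ι] [Ring A] [StarRing A]

/-- The phase prefactors `∏ (e_k e_k* + λ_k e_k* e_k)` of the `T_i` lie in this submonoid. -/
def diagCommutingUnitaries : Submonoid (Matrix ι ι A) :=
  unitary _ ⊓ Submonoid.centralizer (Set.range diagonal)

variable {ι A}

theorem commute_diagonal_of_mem_diagCommutingUnitaries {W : Matrix ι ι A}
    (hW : W ∈ diagCommutingUnitaries ι A) (d : ι → A) : Commute (diagonal d) W :=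
  hW.2 _ ⟨d, rfl⟩

theorem Commute.of_mul_of_mem_diagCommutingUnitaries {d : ι → A} {W X : Matrix ι ι A}
    (h : Commute (diagonal d) (W * X)) (hW : W ∈ diagCommutingUnitaries ι A) :
    Commute (diagonal d) X :=
  h.of_unitary_mul_right hW.1 (commute_diagonal_of_mem_diagCommutingUnitaries hW d)

theorem diagonal_algebraMap_mem_diagCommutingUnitaries [Algebra ℂ A] [StarModule ℂ A]
    {g : ι → ℂ} (hg : ∀ σ, g σ ∈ unitary ℂ) :
    diagonal (fun σ => algebraMap ℂ A (g σ)) ∈ diagCommutingUnitaries ι A := by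
  have h₁ (σ) : star (g σ) * g σ = 1 := Unitary.star_mul_self_of_mem (hg σ)
  have h₂ (σ) : g σ * star (g σ) = 1 := Unitary.mul_star_self_of_mem (hg σ)
  refine Submonoid.mem_inf.mpr ⟨Unitary.mem_iff.mpr ⟨?_, ?_⟩, ?_⟩
  · simp only [star_eq_conjTranspose, diagonal_conjTranspose, diagonal_mul_diagonal,
      Pi.star_apply, ← algebraMap_star_comm, ← map_mul, h₁, map_one, diagonal_one]
  · simp only [star_eq_conjTranspose, diagonal_conjTranspose, diagonal_mul_diagonal,
      Pi.star_apply, ← algebraMap_star_comm, ← map_mul, h₂, map_one, diagonal_one]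
  · rintro _ ⟨d, rfl⟩
    rw [diagonal_mul_diagonal, diagonal_mul_diagonal]
    congr 1
    funext σ
    exact (Algebra.commutes _ _).symm

theorem slotProj_add_smul_slotProj_mem [Algebra ℂ A] [StarModule ℂ A] (i : ι) {a b : Fin 2}
    (hab : a ≠ b) {c : ℂ} (hc : c ∈ unitary ℂ) :
    slotProj i a + c • slotProj i b ∈ diagCommutingUnitaries (ι → Fin 2) A := by
  convert diagonal_algebraMap_mem_diagCommutingUnitaries (A := A)
    (g := fun σ : ι → Fin 2 => if σ i = a then 1 else c) (by intro σ; split_ifs <;> simp [hc])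
  rw [slotProj, slotProj, ← diagonal_smul, diagonal_add]
  congr 1
  funext σ
  by_cases h : σ i = a
  · simp [h, hab]
  · have : σ i = b := by omega
    simp [this, hab.symm, Algebra.algebraMap_eq_smul_one]

end DiagonalCommutingUnitaries

section CreationOperators

variable {A : Type*} [Ring A] {L M : Finset (Fin n)} {k : Fin n}

theorem Ek_apply (hk : k ∈ L ∪ M) (σ τ : Jidx L M) :
    (Ek L M k : Matrix (Jidx L M) (Jidx L M) A) σ τ =
      if τ ⟨k, hk⟩ = 1 ∧ σ = Function.update τ ⟨k, hk⟩ 0 then 1 else 0 := by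
  rw [Ek, dif_pos hk]
  rfl

theorem Ek_apply' (hk : k ∈ L ∪ M) (σ τ : Jidx L M) :
    (Ek L M k : Matrix (Jidx L M) (Jidx L M) A) σ τ =
      if σ ⟨k, hk⟩ = 0 ∧ τ = Function.update σ ⟨k, hk⟩ 1 then 1 else 0 := by
  rw [Ek_apply hk]
  exact if_congr Function.and_eq_update_comm rfl rfl

theorem Ek_mul_apply (hk : k ∈ L ∪ M) (X : Matrix (Jidx L M) (Jidx L M) A) (σ τ : Jidx L M) :
    (Ek L M k * X : Matrix (Jidx L M) (Jidx L M) A) σ τ =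
      if σ ⟨k, hk⟩ = 0 then X (Function.update σ ⟨k, hk⟩ 1) τ else 0 := by
  simp [mul_apply, Ek_apply' hk, ite_and]

theorem mul_Ek_apply (hk : k ∈ L ∪ M) (X : Matrix (Jidx L M) (Jidx L M) A) (σ τ : Jidx L M) :
    (X * Ek L M k : Matrix (Jidx L M) (Jidx L M) A) σ τ =
      if τ ⟨k, hk⟩ = 1 then X σ (Function.update τ ⟨k, hk⟩ 0) else 0 := by
  simp [mul_apply, Ek_apply hk, ite_and]

theorem Ek_mul_Ek : (Ek L M k * Ek L M k : Matrix (Jidx L M) (Jidx L M) A) = 0 := by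
  by_cases hk : k ∈ L ∪ M
  · ext σ τ
    simp [mul_Ek_apply hk, Ek_apply hk]
  · simp [Ek, hk]

theorem commute_diagonal_const_Ek (b : A) (k : Fin n) :
    Commute (diagonal fun _ => b) (Ek L M k) := by
  by_cases hk : k ∈ L ∪ M
  · refine commute_diagonal_const_iff.mpr fun σ τ => ?_
    rw [Ek_apply hk]
    split_ifs
    exacts [Commute.one_right b, Commute.zero_right b]
  · simp [Ek, hk]

theorem update_eq_of_commute_Ek (hk : k ∈ L ∪ M) {c : Jidx L M → A}
    (h : Commute (diagonal c) (Ek L M k)) (τ : Jidx L M) :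
    c (Function.update τ ⟨k, hk⟩ 0) = c (Function.update τ ⟨k, hk⟩ 1) := by
  simpa [diagonal_mul, mul_diagonal, Ek_apply hk] using
    congr_fun₂ h.eq (Function.update τ ⟨k, hk⟩ 0) (Function.update τ ⟨k, hk⟩ 1)

theorem commute_of_commute_diagonal_Ek_mul_scalarMat (hk : k ∈ L ∪ M) {b w : A}
    (h : Commute (diagonal fun _ => b) (Ek L M k * scalarMat L M w)) : Commute b w := by
  simpa [scalarMat, mul_diagonal, Ek_apply hk] using
    commute_diagonal_const_iff.mp h (Function.update 0 ⟨k, hk⟩ 0) (Function.update 0 ⟨k, hk⟩ 1)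

theorem commute_of_commute_diagonal_scalarMat {b w : A}
    (h : Commute (diagonal fun _ => b) (scalarMat L M w)) : Commute b w := by
  simpa [scalarMat] using commute_diagonal_const_iff.mp h 0 0

theorem commute_scalarMat_slotProj (w : A)
    (i : {k // k ∈ L ∪ M}) (a : Fin 2) : Commute (scalarMat L M w) (slotProj i a) :=
  (commute_slotProj_diagonal _ _ _).symm

theorem prodOver_mem {S : Type*}
    [SetLike S (Matrix (Jidx L M) (Jidx L M) A)] [SubmonoidClass S (Matrix (Jidx L M) (Jidx L M) A)]
    {𝒮 : S} {s : Finset (Fin n)}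
    {f : Fin n → Matrix (Jidx L M) (Jidx L M) A} (hf : ∀ k ∈ s, f k ∈ 𝒮) : prodOver s f ∈ 𝒮 :=
  list_prod_mem fun _ hX => by
    obtain ⟨k, hk, rfl⟩ := List.mem_map.mp hX
    exact hf k ((Finset.mem_sort _).mp hk)

variable [StarRing A]

theorem Ek_mul_star_Ek (hk : k ∈ L ∪ M) :
    (Ek L M k * star (Ek L M k) : Matrix (Jidx L M) (Jidx L M) A) = slotProj ⟨k, hk⟩ 0 := by
  ext σ τ
  rw [Ek_mul_apply hk, star_apply, Ek_apply hk, slotProj, diagonal_apply]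
  by_cases h : σ ⟨k, hk⟩ = 0
  · have hσ : Function.update σ ⟨k, hk⟩ 0 = σ := by simp [h]
    by_cases hστ : σ = τ
    · subst hστ
      simp [h, hσ]
    · simp [h, hσ, hστ, Ne.symm hστ]
  · simp [h]

theorem star_Ek_mul_Ek (hk : k ∈ L ∪ M) :
    (star (Ek L M k) * Ek L M k : Matrix (Jidx L M) (Jidx L M) A) = slotProj ⟨k, hk⟩ 1 := by
  ext σ τ
  rw [mul_Ek_apply hk, star_apply, Ek_apply' hk, slotProj, diagonal_apply]
  by_cases h : τ ⟨k, hk⟩ = 1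
  · have hτ : Function.update τ ⟨k, hk⟩ 1 = τ := by simp [h]
    by_cases hστ : σ = τ <;> simp [h, hτ, hστ]
  · by_cases hστ : σ = τ <;> simp [h, hστ]

theorem Ek_mul_slotProj_zero (hk : k ∈ L ∪ M) :
    (Ek L M k * slotProj ⟨k, hk⟩ 0 : Matrix (Jidx L M) (Jidx L M) A) = 0 := by
  rw [← Ek_mul_star_Ek hk, ← mul_assoc, Ek_mul_Ek, zero_mul]

theorem Ek_mul_slotProj_one (hk : k ∈ L ∪ M) :
    (Ek L M k * slotProj ⟨k, hk⟩ 1 : Matrix (Jidx L M) (Jidx L M) A) = Ek L M k := by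
  rw [slotProj_one, mul_sub, Ek_mul_slotProj_zero, mul_one, sub_zero]

theorem star_Ek_mul_slotProj_one (hk : k ∈ L ∪ M) :
    (star (Ek L M k) * slotProj ⟨k, hk⟩ 1 : Matrix (Jidx L M) (Jidx L M) A) = 0 := by
  rw [← star_Ek_mul_Ek hk, ← mul_assoc, ← star_mul, Ek_mul_Ek, star_zero, zero_mul]

theorem star_Ek_mul_slotProj_zero (hk : k ∈ L ∪ M) :
    (star (Ek L M k) * slotProj ⟨k, hk⟩ 0 : Matrix (Jidx L M) (Jidx L M) A) = star (Ek L M k) := by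
  rw [slotProj_zero, mul_sub, star_Ek_mul_slotProj_one, mul_one, sub_zero]

theorem slotProj_one_mul_Ek (hk : k ∈ L ∪ M) :
    (slotProj ⟨k, hk⟩ 1 * Ek L M k : Matrix (Jidx L M) (Jidx L M) A) = 0 := by
  rw [← star_Ek_mul_Ek hk, mul_assoc, Ek_mul_Ek, mul_zero]

theorem Ek_mul_mul_Ek_of_commute (hk : k ∈ L ∪ M) {D : Matrix (Jidx L M) (Jidx L M) A}
    (hD : Commute D (slotProj ⟨k, hk⟩ 1)) : Ek L M k * D * Ek L M k = 0 := by
  calc Ek L M k * D * Ek L M k = Ek L M k * slotProj ⟨k, hk⟩ 1 * D * Ek L M k := by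
        rw [Ek_mul_slotProj_one hk]
    _ = Ek L M k * D * (slotProj ⟨k, hk⟩ 1 * Ek L M k) := by
        rw [mul_assoc (Ek L M k), ← hD.eq, ← mul_assoc, mul_assoc]
    _ = 0 := by rw [slotProj_one_mul_Ek, mul_zero]

theorem update_eq_of_commute_star_Ek (hk : k ∈ L ∪ M) {c : Jidx L M → A}
    (h : Commute (diagonal c) (star (Ek L M k))) (τ : Jidx L M) :
    c (Function.update τ ⟨k, hk⟩ 0) = c (Function.update τ ⟨k, hk⟩ 1) := by
  refine star_injective (update_eq_of_commute_Ek hk (c := star c) ?_ τ)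
  simpa [star_eq_conjTranspose, diagonal_conjTranspose] using h.star_star

end CreationOperators

section MixedOperator

variable {A : Type*} [Ring A] [StarRing A] [Algebra ℂ A] {L M : Finset (Fin n)} {k : Fin n}

def mixOp (L M : Finset (Fin n)) (k : Fin n) (U : Matrix (Jidx L M) (Jidx L M) A) (w : A)
    (a b : ℂ) : Matrix (Jidx L M) (Jidx L M) A :=
  a • (U * Ek L M k * scalarMat L M w) + b • star (Ek L M k)

theorem star_mixOp_mul_mixOp [StarModule ℂ A] (hk : k ∈ L ∪ M)
    {U : Matrix (Jidx L M) (Jidx L M) A} (hU : U ∈ diagCommutingUnitaries (Jidx L M) A) {w : A}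
    (hw : w ∈ unitary A) (a b : ℂ) :
    star (mixOp L M k U w a b) * mixOp L M k U w a b =
      (star a * a) • slotProj ⟨k, hk⟩ 1 + (star b * b) • slotProj ⟨k, hk⟩ 0 := by
  have hV : star (scalarMat L M w) * scalarMat L M w = 1 := by
    simp [scalarMat, star_eq_conjTranspose, diagonal_conjTranspose, Unitary.star_mul_self_of_mem hw]
  have hUP : Commute U (slotProj ⟨k, hk⟩ 1) :=
    (commute_diagonal_of_mem_diagCommutingUnitaries hU _).symm
  have hXX : star (U * Ek L M k * scalarMat L M w) * (U * Ek L M k * scalarMat L M w) =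
      slotProj ⟨k, hk⟩ 1 := by
    simp only [star_mul, mul_assoc]
    rw [← mul_assoc (star U), Unitary.star_mul_self_of_mem hU.1, one_mul,
      ← mul_assoc (star (Ek L M k)), star_Ek_mul_Ek hk, ← (commute_scalarMat_slotProj _ _ _).eq,
      ← mul_assoc, hV, one_mul]
  have hXY : star (U * Ek L M k * scalarMat L M w) * star (Ek L M k) = 0 := by
    rw [← star_mul, ← mul_assoc, ← mul_assoc, Ek_mul_mul_Ek_of_commute hk hUP, zero_mul, star_zero]
  have hYX : star (star (Ek L M k)) * (U * Ek L M k * scalarMat L M w) = 0 := by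
    rw [star_star, ← mul_assoc, ← mul_assoc, Ek_mul_mul_Ek_of_commute hk hUP, zero_mul]
  have hYY : star (star (Ek L M k)) * star (Ek L M k) =
      (slotProj ⟨k, hk⟩ 0 : Matrix (Jidx L M) (Jidx L M) A) := by
    rw [star_star, Ek_mul_star_Ek hk]
  simp only [mixOp, star_add, star_smul, add_mul, mul_add, smul_mul_assoc, mul_smul_comm,
    hXX, hXY, hYX, hYY, smul_zero, add_zero, zero_add, smul_smul]
  rw [mul_comm a, mul_comm b]

theorem mixOp_mul_slotProj_one (hk : k ∈ L ∪ M) (U : Matrix (Jidx L M) (Jidx L M) A) (w : A)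
    (a b : ℂ) :
    mixOp L M k U w a b * slotProj ⟨k, hk⟩ 1 = a • (U * Ek L M k * scalarMat L M w) := by
  rw [mixOp, add_mul, smul_mul_assoc, smul_mul_assoc, star_Ek_mul_slotProj_one, smul_zero,
    add_zero, mul_assoc _ (scalarMat L M w), (commute_scalarMat_slotProj _ _ _).eq, ← mul_assoc,
    mul_assoc U, Ek_mul_slotProj_one]

theorem mixOp_mul_slotProj_zero (hk : k ∈ L ∪ M) (U : Matrix (Jidx L M) (Jidx L M) A) (w : A)
    (a b : ℂ) : mixOp L M k U w a b * slotProj ⟨k, hk⟩ 0 = b • star (Ek L M k) := by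
  rw [mixOp, add_mul, smul_mul_assoc, smul_mul_assoc, star_Ek_mul_slotProj_zero,
    mul_assoc _ (scalarMat L M w), (commute_scalarMat_slotProj _ _ _).eq, ← mul_assoc,
    mul_assoc U, Ek_mul_slotProj_zero, mul_zero, zero_mul, smul_zero, zero_add]

end MixedOperator

section Phases

variable {A : Type*} [Ring A] [StarRing A] [Algebra ℂ A] [StarModule ℂ A]
  {L M : Finset (Fin n)}

theorem prodOver_Ek_mul_star_Ek_add_smul_mem {s : Finset (Fin n)} (hs : s ⊆ L ∪ M)
    {c : Fin n → ℂ} (hc : ∀ k, c k ∈ unitary ℂ) :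
    prodOver s (fun k => Ek L M k * star (Ek L M k) + c k • (star (Ek L M k) * Ek L M k)) ∈
      diagCommutingUnitaries (Jidx L M) A :=
  prodOver_mem fun k hk => by
    rw [Ek_mul_star_Ek (hs hk), star_Ek_mul_Ek (hs hk)]
    exact slotProj_add_smul_slotProj_mem _ (by decide) (hc k)

theorem prodOver_star_Ek_mul_Ek_add_smul_mem {s : Finset (Fin n)} (hs : s ⊆ L ∪ M)
    {c : Fin n → ℂ} (hc : ∀ k, c k ∈ unitary ℂ) :
    prodOver s (fun k => star (Ek L M k) * Ek L M k + c k • (Ek L M k * star (Ek L M k))) ∈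
      diagCommutingUnitaries (Jidx L M) A :=
  prodOver_mem fun k hk => by
    rw [Ek_mul_star_Ek (hs hk), star_Ek_mul_Ek (hs hk)]
    exact slotProj_add_smul_slotProj_mem _ (by decide) (hc k)

variable (Θ : Matrix (Fin n) (Fin n) ℝ) (x : Fin n → ℝ) (v : Fin n → A) {i : Fin n}

theorem exists_carOp_eq_of_mem_left (hi : i ∈ L) :
    ∃ W ∈ diagCommutingUnitaries (Jidx L M) A, carOp L M Θ x v i = W * Ek L M i := by
  rw [carOp, if_pos hi]
  refine ⟨_, ?_, rfl⟩
  exact prodOver_Ek_mul_star_Ek_add_smul_mem Finset.subset_union_left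
    fun _ => Complex.exp_mem_unitary (by simp)

theorem exists_carOp_eq_of_mem_middle (hiL : i ∉ L) (hiM : i ∈ M) :
    ∃ W ∈ diagCommutingUnitaries (Jidx L M) A, ∃ U ∈ diagCommutingUnitaries (Jidx L M) A,
      carOp L M Θ x v i = W * mixOp L M i U (v i) (Real.sqrt (x i)) (Real.sqrt (1 - x i)) := by
  rw [carOp, if_neg hiL, if_pos hiM]
  refine ⟨_, mul_mem ?_ ?_, _, ?_, rfl⟩
  · exact prodOver_Ek_mul_star_Ek_add_smul_mem Finset.subset_union_left
      fun _ => Complex.exp_mem_unitary (by simp)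
  all_goals
    exact prodOver_star_Ek_mul_Ek_add_smul_mem
      ((Finset.filter_subset _ _).trans Finset.subset_union_right)
      fun _ => Complex.exp_mem_unitary (by simp)

theorem exists_carOp_eq_of_mem_right (hiL : i ∉ L) (hiM : i ∉ M) :
    ∃ W ∈ diagCommutingUnitaries (Jidx L M) A,
      carOp L M Θ x v i = W * ((Real.sqrt 2 : ℂ)⁻¹ • scalarMat L M (v i)) := by
  rw [carOp, if_neg hiL, if_neg hiM]
  refine ⟨_, mul_mem ?_ ?_, rfl⟩
  · exact prodOver_Ek_mul_star_Ek_add_smul_mem Finset.subset_union_left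
      fun _ => Complex.exp_mem_unitary (by simp)
  · exact prodOver_star_Ek_mul_Ek_add_smul_mem Finset.subset_union_right
      fun _ => Complex.exp_mem_unitary (by simp)

end Phases

section CarCommutant

variable {A : Type*} [Ring A] [StarRing A] [Algebra ℂ A] [StarModule ℂ A] {L M R : Finset (Fin n)}
  {Θ : Matrix (Fin n) (Fin n) ℝ} {x : Fin n → ℝ} {v : Fin n → A} {k : Fin n}

theorem commute_slotProj_of_commute_carOp (hLM : Disjoint L M)
    (hv : ∀ i ∈ M, v i ∈ unitary A) (hx : ∀ i ∈ M, 0 < x i ∧ x i < 1 / 2) (hk : k ∈ L ∪ M)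
    {C : Matrix (Jidx L M) (Jidx L M) A} (h : Commute C (carOp L M Θ x v k))
    (h' : Commute C (star (carOp L M Θ x v k))) : Commute C (slotProj ⟨k, hk⟩ 1) := by
  have hT := h'.mul_right h
  rcases Finset.mem_union.mp hk with hkL | hkM
  · obtain ⟨W, hW, hW_eq⟩ := exists_carOp_eq_of_mem_left (M := M) Θ x v hkL
    rwa [hW_eq, star_mul_self_unitary_mul hW.1, star_Ek_mul_Ek hk] at hT
  · obtain ⟨W, hW, U, hU, hW_eq⟩ :=
      exists_carOp_eq_of_mem_middle Θ x v (Finset.disjoint_right.mp hLM hkM) hkM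
    rw [hW_eq, star_mul_self_unitary_mul hW.1, star_mixOp_mul_mixOp hk hU (hv k hkM),
      slotProj_zero] at hT
    have hsq (t : ℝ) (ht : 0 ≤ t) : star (Real.sqrt t : ℂ) * Real.sqrt t = t := by
      rw [Complex.star_def, Complex.conj_ofReal, ← Complex.ofReal_mul, Real.mul_self_sqrt ht]
    rw [hsq _ (hx k hkM).1.le, hsq _ (by linarith [(hx k hkM).2])] at hT
    refine Commute.of_smul_add_smul_one_sub ?_ hT
    exact_mod_cast (by linarith [(hx k hkM).2] : x k ≠ 1 - x k)

theorem update_eq_of_commute_carOp (hLM : Disjoint L M) (hx : ∀ i ∈ M, 0 < x i ∧ x i < 1 / 2)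
    (hk : k ∈ L ∪ M) {c : Jidx L M → A} (h : Commute (diagonal c) (carOp L M Θ x v k))
    (τ : Jidx L M) : c (Function.update τ ⟨k, hk⟩ 0) = c (Function.update τ ⟨k, hk⟩ 1) := by
  rcases Finset.mem_union.mp hk with hkL | hkM
  · obtain ⟨W, hW, hW_eq⟩ := exists_carOp_eq_of_mem_left (M := M) Θ x v hkL
    rw [hW_eq] at h
    exact update_eq_of_commute_Ek hk (h.of_mul_of_mem_diagCommutingUnitaries hW) τ
  · obtain ⟨W, hW, U, hU, hW_eq⟩ :=
      exists_carOp_eq_of_mem_middle Θ x v (Finset.disjoint_right.mp hLM hkM) hkM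
    rw [hW_eq] at h
    have hS := (h.of_mul_of_mem_diagCommutingUnitaries hW).mul_right
      (commute_slotProj_diagonal ⟨k, hk⟩ 0 c).symm
    rw [mixOp_mul_slotProj_zero, Commute.smul_right_iff₀] at hS
    · exact update_eq_of_commute_star_Ek hk hS τ
    · exact Complex.ofReal_ne_zero.mpr (Real.sqrt_pos.mpr (by linarith [(hx k hkM).2])).ne'

theorem commute_of_commute_carOp (hLM : Disjoint L M) (hLR : Disjoint L R) (hMR : Disjoint M R)
    (hx : ∀ i ∈ M, 0 < x i ∧ x i < 1 / 2) {i : Fin n} (hi : i ∈ M ∪ R) {b : A}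
    (h : Commute (diagonal fun _ => b) (carOp L M Θ x v i)) : Commute b (v i) := by
  rcases Finset.mem_union.mp hi with hiM | hiR
  · have hk : i ∈ L ∪ M := Finset.mem_union_right L hiM
    obtain ⟨W, hW, U, hU, hW_eq⟩ :=
      exists_carOp_eq_of_mem_middle Θ x v (Finset.disjoint_right.mp hLM hiM) hiM
    rw [hW_eq] at h
    have hS := (h.of_mul_of_mem_diagCommutingUnitaries hW).mul_right
      (commute_slotProj_diagonal ⟨i, hk⟩ 1 _).symm
    rw [mixOp_mul_slotProj_one, Commute.smul_right_iff₀, mul_assoc] at hS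
    · exact commute_of_commute_diagonal_Ek_mul_scalarMat hk
        (hS.of_mul_of_mem_diagCommutingUnitaries hU)
    · exact Complex.ofReal_ne_zero.mpr (Real.sqrt_pos.mpr (hx i hiM).1).ne'
  · obtain ⟨W, hW, hW_eq⟩ := exists_carOp_eq_of_mem_right Θ x v
      (Finset.disjoint_right.mp hLR hiR) (Finset.disjoint_right.mp hMR hiR)
    rw [hW_eq] at h
    have hS := h.of_mul_of_mem_diagCommutingUnitaries hW
    rw [Commute.smul_right_iff₀ (by simp)] at hS
    exact commute_of_commute_diagonal_scalarMat hS

theorem carOp_mem {𝒜 : StarSubalgebra ℂ (Matrix (Jidx L M) (Jidx L M) A)}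
    (hE : ∀ k, Ek L M k ∈ 𝒜) (hv : ∀ i ∉ L, scalarMat L M (v i) ∈ 𝒜) (i : Fin n) :
    carOp L M Θ x v i ∈ 𝒜 := by
  have hL (c : ℂ) (k : Fin n) :
      Ek L M k * star (Ek L M k) + c • (star (Ek L M k) * Ek L M k) ∈ 𝒜 :=
    add_mem (mul_mem (hE k) (star_mem (hE k))) (𝒜.smul_mem (mul_mem (star_mem (hE k)) (hE k)) c)
  have hM (c : ℂ) (k : Fin n) :
      star (Ek L M k) * Ek L M k + c • (Ek L M k * star (Ek L M k)) ∈ 𝒜 :=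
    add_mem (mul_mem (star_mem (hE k)) (hE k)) (𝒜.smul_mem (mul_mem (hE k) (star_mem (hE k))) c)
  unfold carOp
  split_ifs with hiL hiM
  · exact mul_mem (prodOver_mem fun k _ => hL _ k) (hE i)
  · refine mul_mem (mul_mem (prodOver_mem fun k _ => hL _ k) (prodOver_mem fun k _ => hM _ k))
      (add_mem (𝒜.smul_mem ?_ _) (𝒜.smul_mem (star_mem (hE i)) _))
    exact mul_mem (mul_mem (prodOver_mem fun k _ => hM _ k) (hE i)) (hv i hiL)
  · exact mul_mem (mul_mem (prodOver_mem fun k _ => hL _ k) (prodOver_mem fun k _ => hM _ k))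
      (𝒜.smul_mem (hv i hiL) _)

theorem commute_carOp_of_commute (hcover : L ∪ M ∪ R = Finset.univ)
    (hv : ∀ i ∈ M ∪ R, v i ∈ unitary A) {b : A} (hb : ∀ i ∈ M ∪ R, Commute b (v i)) (i : Fin n) :
    Commute (diagonal fun _ => b) (carOp L M Θ x v i) ∧
      Commute (diagonal fun _ => b) (star (carOp L M Θ x v i)) := by
  have hMR (j : Fin n) (hj : j ∉ L) : j ∈ M ∪ R := by
    rw [Finset.union_assoc] at hcover
    exact (Finset.mem_union.mp (hcover ▸ Finset.mem_univ j)).resolve_left hj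
  set 𝒜 := StarSubalgebra.centralizer ℂ {(diagonal fun _ => b : Matrix (Jidx L M) (Jidx L M) A)}
  have h𝒜 {X} : X ∈ 𝒜 ↔ Commute (diagonal fun _ => b) X ∧ Commute (diagonal fun _ => star b) X := by
    simp [𝒜, StarSubalgebra.mem_centralizer_iff, Commute, SemiconjBy, star_eq_conjTranspose,
      diagonal_conjTranspose, Pi.star_def]
  have hi : carOp L M Θ x v i ∈ 𝒜 := by
    refine carOp_mem
      (fun k => h𝒜.mpr ⟨commute_diagonal_const_Ek _ k, commute_diagonal_const_Ek _ k⟩)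
      (fun j hj => h𝒜.mpr ⟨?_, ?_⟩) i
    · exact (hb j (hMR j hj)).map (scalar _)
    · exact ((hb j (hMR j hj)).star_right_of_mem_unitary (hv j (hMR j hj))).star_left.map (scalar _)
  exact ⟨(h𝒜.mp hi).1, (h𝒜.mp (star_mem hi)).1⟩

end CarCommutant

theorem commute_carOp_iff {A : Type*} [Ring A] [StarRing A] [Algebra ℂ A] [StarModule ℂ A]
    {L M R : Finset (Fin n)} (hLM : Disjoint L M) (hLR : Disjoint L R) (hMR : Disjoint M R)
    (hcover : L ∪ M ∪ R = Finset.univ) (Θ : Matrix (Fin n) (Fin n) ℝ) {v : Fin n → A}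
    (hv : ∀ i ∈ M ∪ R, v i ∈ unitary A) {x : Fin n → ℝ} (hx : ∀ i ∈ M, 0 < x i ∧ x i < 1 / 2)
    (C : Matrix (Jidx L M) (Jidx L M) A) :
    (∀ i, Commute C (carOp L M Θ x v i) ∧ Commute C (star (carOp L M Θ x v i))) ↔
      ∃ C', (∀ i ∈ M ∪ R, Commute C' (v i)) ∧ C = diagonal fun _ => C' := by
  refine ⟨fun hC => ?_, fun ⟨C', hC', hC_eq⟩ => hC_eq ▸ commute_carOp_of_commute hcover hv hC'⟩
  have hdiag : C = diagonal fun σ => C σ σ :=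
    eq_diagonal_of_forall_commute_slotProj fun ⟨k, hk⟩ => commute_slotProj_of_commute_carOp hLM
      (fun i hi => hv i (Finset.mem_union_left R hi)) hx hk (hC k).1 (hC k).2
  have hconst : C = diagonal fun _ => C 0 0 := by
    refine hdiag.trans (congrArg diagonal (funext fun σ => ?_))
    refine Function.apply_eq_of_update_zero_eq_update_one (c := fun σ => C σ σ)
      (fun τ ⟨k, hk⟩ => ?_) σ 0
    exact update_eq_of_commute_carOp hLM hx hk (hdiag ▸ (hC k).1) τ
  exact ⟨C 0 0, fun i hi => commute_of_commute_carOp hLM hLR hMR hx hi (hconst ▸ (hC i).1), hconst⟩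

theorem stmt9_general {H : Type*} [NormedAddCommGroup H] [InnerProductSpace ℂ H] [CompleteSpace H]
    (L M R : Finset (Fin n))
    (hLM : Disjoint L M) (hLR : Disjoint L R) (hMR : Disjoint M R)
    (hcover : L ∪ M ∪ R = Finset.univ)
    (Θ : Matrix (Fin n) (Fin n) ℝ)
    (v : Fin n → (H →L[ℂ] H))
    (hvu : ∀ i ∈ M ∪ R, v i ∈ unitary (H →L[ℂ] H))
    (x : Fin n → ℝ) (hx : ∀ i ∈ M, 0 < x i ∧ x i < 1/2) :
    (∀ C : Matrix (Jidx L M) (Jidx L M) (H →L[ℂ] H),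
      (∀ i, C * carOp L M Θ x v i = carOp L M Θ x v i * C ∧
            C * star (carOp L M Θ x v i) = star (carOp L M Θ x v i) * C) ↔
      (∃ C' : H →L[ℂ] H, (∀ i ∈ M ∪ R, C' * v i = v i * C') ∧
        C = Matrix.diagonal (fun _ => C'))) ∧
    ((∀ C : Matrix (Jidx L M) (Jidx L M) (H →L[ℂ] H),
        (∀ i, C * carOp L M Θ x v i = carOp L M Θ x v i * C ∧
              C * star (carOp L M Θ x v i) = star (carOp L M Θ x v i) * C) →
        ∃ c : ℂ, C = c • 1) ↔
      (∀ C' : H →L[ℂ] H, (∀ i ∈ M ∪ R, C' * v i = v i * C') → ∃ c : ℂ, C' = c • 1)) := by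
  have hcommutant := commute_carOp_iff hLM hLR hMR hcover Θ hvu hx
  exact ⟨hcommutant, Matrix.forall_eq_smul_one_iff_of_forall_iff_eq_diagonal hcommutant⟩

theorem stmt9 {H : Type*} [NormedAddCommGroup H] [InnerProductSpace ℂ H] [CompleteSpace H]
    (L M R : Finset (Fin n))
    (hLM : Disjoint L M) (hLR : Disjoint L R) (hMR : Disjoint M R)
    (hcover : L ∪ M ∪ R = Finset.univ)
    (Θ : Matrix (Fin n) (Fin n) ℝ) (hΘ : Θᵀ = -Θ)
    (v : Fin n → (H →L[ℂ] H))
    (hvu : ∀ i ∈ M ∪ R, v i ∈ unitary (H →L[ℂ] H))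
    (hvcomm : ∀ i ∈ M ∪ R, ∀ j ∈ M ∪ R, v i * v j =
      Complex.exp (-(2 * Real.pi * Complex.I * (SigMat M R Θ i j : ℂ))) • (v j * v i))
    (x : Fin n → ℝ) (hx : ∀ i ∈ M, 0 < x i ∧ x i < 1/2) :
    (∀ C : Matrix (Jidx L M) (Jidx L M) (H →L[ℂ] H),
      (∀ i, C * carOp L M Θ x v i = carOp L M Θ x v i * C ∧
            C * star (carOp L M Θ x v i) = star (carOp L M Θ x v i) * C) ↔
      (∃ C' : H →L[ℂ] H, (∀ i ∈ M ∪ R, C' * v i = v i * C') ∧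
        C = Matrix.diagonal (fun _ => C'))) ∧
    ((∀ C : Matrix (Jidx L M) (Jidx L M) (H →L[ℂ] H),
        (∀ i, C * carOp L M Θ x v i = carOp L M Θ x v i * C ∧
              C * star (carOp L M Θ x v i) = star (carOp L M Θ x v i) * C) →
        ∃ c : ℂ, C = c • 1) ↔
      (∀ C' : H →L[ℂ] H, (∀ i ∈ M ∪ R, C' * v i = v i * C') → ∃ c : ℂ, C' = c • 1)) :=
  stmt9_general L M R hLM hLR hMR hcover Θ v hvu x hx
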